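/- In the $n$-hop line network with mutually independent renewal processes $N^{(0,0)}$ (source updates) and $N^{(i,i+1)}$ for $0 \leq i \leq n-1$ (links), define $\Delta_0(t) = 0$ and $\Delta_i(t) = A^{(n-i,n-i+1)}\big(t - \sum_{j=0}^{i-1}\Delta_j(t)\big)$ for $1 \leq i \leq n$. Then the instantaneous version age at node $n$ satisfies $X_n(t) = N^{(0,0)}(t) - N^{(0,0)}\big(t - \sum_{j=1}^{n}\Delta_j(t)\big)$. -/

import Mathlib

open MeasureTheory ProbabilityTheory Filter

structure RenewalProcess (Ω : Type*) [MeasureSpace Ω] : Type _ where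
  Y : ℕ → Ω → ℝ
  meas : ∀ n, Measurable (Y n)
  indep : iIndepFun Y ℙ
  ident : ∀ n, IdentDistrib (Y n) (Y 0) ℙ ℙ
  pos : ∀ n, ∀ᵐ ω ∂(ℙ : Measure Ω), 0 < Y n ω

namespace RenewalProcess

variable {Ω : Type*} [MeasureSpace Ω] (R : RenewalProcess Ω)

/-- Renewal epochs. -/
def T (n : ℕ) (ω : Ω) : ℝ := ∑ k ∈ Finset.range n, R.Y k ω

/-- Counting process. -/
noncomputable def N (t : ℝ) (ω : Ω) : ℕ := sSup {n : ℕ | R.T n ω ≤ t}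

/-- Backward recurrence time. -/
noncomputable def A (t : ℝ) (ω : Ω) : ℝ := t - R.T (R.N t ω) ω

/-- Forward recurrence time. -/
noncomputable def B (t : ℝ) (ω : Ω) : ℝ := R.T (R.N t ω + 1) ω - t

/-- Mean inter-renewal time. -/
noncomputable def mean : ℝ := ∫ ω, R.Y 0 ω ∂ℙ

def FiniteFirstMoment : Prop := Integrable (R.Y 0) ℙ

def FiniteSecondMoment : Prop := Integrable (fun ω => (R.Y 0 ω) ^ 2) ℙ

/-- The inter-renewal distribution is non-arithmetic: it is not supported
on any lattice `{0, d, 2d, …}` with `d > 0`. -/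
def NonArithmetic : Prop :=
  ¬ ∃ d > (0 : ℝ), ∀ᵐ ω ∂(ℙ : Measure Ω), ∃ n : ℕ, R.Y 0 ω = n * d

/-- The sigma-algebra generated by the renewal process. -/
def sigma : MeasurableSpace Ω := ⨆ n, MeasurableSpace.comap (R.Y n) inferInstance

end RenewalProcess

/-- Sigma-algebra generated by a continuous-time process. -/
def procSigma {Ω : Type*} (S : ℝ → Ω → ℝ) : MeasurableSpace Ω :=
  ⨆ t, MeasurableSpace.comap (S t) inferInstance

/-! Since `Xₖ(s) - N(s)` is unchanged by one step of the recursion, it is constant along the chain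
of evaluation times `t = u₀, u₁, …, uₙ`, where `uᵢ₊₁ = uᵢ - Δᵢ₊₁(t)`; at the end of the chain
`X₀ = 0`, so `Xₙ(t) = N(t) - N(uₙ)`. -/

theorem sub_eq_sub_of_chain_step {α G : Type*} [AddCommGroup G] {n : ℕ}
    {f : α → G} {X : ℕ → α → G} {u : ℕ → α}
    (hstep : ∀ i < n, X (n - i) (u i) = f (u i) - f (u (i + 1)) + X (n - (i + 1)) (u (i + 1))) :
    X n (u 0) - f (u 0) = X 0 (u n) - f (u n) := by
  have hconst : ∑ i ∈ Finset.range n,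
      ((X (n - (i + 1)) (u (i + 1)) - f (u (i + 1))) - (X (n - i) (u i) - f (u i))) = 0 :=
    Finset.sum_eq_zero fun i hi => by
      rw [hstep i (Finset.mem_range.mp hi)]
      abel
  rw [Finset.sum_range_sub (fun i => X (n - i) (u i) - f (u i)), sub_eq_zero] at hconst
  simpa using hconst.symm

/-- n-hop line network, telescoping identity: with
`Δ₀(t) = 0` and `Δᵢ(t) = A⁽ⁿ⁻ⁱ'ⁿ⁻ⁱ⁺¹⁾(t - ∑_{j<i} Δⱼ(t))`, the version age at node `n`
satisfies `Xₙ(t) = N⁽⁰⁰⁾(t) - N⁽⁰⁰⁾(t - ∑_{j=1}^n Δⱼ(t))`. -/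
theorem n_hop_version_age_telescoping {Ω : Type*} [MeasureSpace Ω]
    {n : ℕ}
    (R0 : RenewalProcess Ω) (Rl : Fin n → RenewalProcess Ω)
    (X : ℕ → ℝ → Ω → ℝ)
    (hX0 : ∀ s ω, X 0 s ω = 0)
    (hXrec : ∀ i : ℕ, ∀ h : i < n, ∀ s ω, X (i + 1) s ω =
      (R0.N s ω : ℝ) - (R0.N (s - (Rl ⟨i, h⟩).A s ω) ω : ℝ)
        + X i (s - (Rl ⟨i, h⟩).A s ω) ω)
    (Δ : ℕ → ℝ → Ω → ℝ)
    (hΔ0 : ∀ t ω, Δ 0 t ω = 0)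
    (hΔrec : ∀ i : ℕ, ∀ h1 : 1 ≤ i, ∀ h2 : i ≤ n, ∀ t ω, Δ i t ω =
      (Rl ⟨n - i, by omega⟩).A (t - ∑ j ∈ Finset.range i, Δ j t ω) ω)
     :
    ∀ t ω, X n t ω =
      (R0.N t ω : ℝ) - (R0.N (t - ∑ j ∈ Finset.Icc 1 n, Δ j t ω) ω : ℝ) := by
  intro t ω
  set u : ℕ → ℝ := fun i => t - ∑ j ∈ Finset.range (i + 1), Δ j t ω with hu
  have hu_succ : ∀ i (hi : i < n), u (i + 1) = u i - (Rl ⟨n - (i + 1), by omega⟩).A (u i) ω := by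
    intro i hi
    simp only [hu, Finset.sum_range_succ _ (i + 1), hΔrec (i + 1) (by omega) hi t ω]
    ring
  have hstep : ∀ i < n, X (n - i) (u i) ω =
      R0.N (u i) ω - R0.N (u (i + 1)) ω + X (n - (i + 1)) (u (i + 1)) ω := by
    intro i hi
    rw [hu_succ i hi, show n - i = n - (i + 1) + 1 by omega, hXrec]
  have hu0 : u 0 = t := by simp [hu, hΔ0]
  have hun : u n = t - ∑ j ∈ Finset.Icc 1 n, Δ j t ω := by
    simp only [hu]
    rw [Finset.sum_range_eq_add_Ico _ (by omega : 0 < n + 1), hΔ0, zero_add,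
      Finset.Ico_add_one_right_eq_Icc]
  have htele := sub_eq_sub_of_chain_step (f := fun s => (R0.N s ω : ℝ))
    (X := fun k s => X k s ω) hstep
  rw [hu0, hun, hX0, zero_sub] at htele
  linarith
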